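/- Let 0 < p < 1 and let f be the H_p(G x G) martingale built from atoms a_k = 2^{alpha_k(2/p-2)}(D_{2^{alpha_k+1}} - D_{2^{alpha_k}}) tensor (D_{2^{alpha_k+1}} - D_{2^{alpha_k}}) with coefficients lambda_k = Phi(2^{alpha_k})^{-1/4}. For 2^{alpha_k} < n < 2^{alpha_k + 1} with n odd, and for all (x,y) in (G \ I_1) x (G \ I_1), one has |S_{n,n} f(x,y)| = 2^{alpha_k(2/p-2)} / Phi^{1/4}(2^{alpha_k}). -/

import Mathlib

open MeasureTheory ENNReal NNReal

noncomputable section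

/-- The Walsh group: countable product of `ZMod 2`. -/
abbrev G : Type := ℕ → ZMod 2

instance : MeasurableSpace (ZMod 2) := ⊤

/-- Walsh-Paley function `w n`. -/
def walsh (n : ℕ) (x : G) : ℝ :=
  ∏ k ∈ Finset.range (n + 1), if n.testBit k ∧ x k = 1 then -1 else 1

/-- Walsh-Dirichlet kernel `D n`. -/
def dirichlet (n : ℕ) (x : G) : ℝ := ∑ k ∈ Finset.range n, walsh k x

/-- Dyadic interval `I_n` (centered at `0`). -/
def Icyl (n : ℕ) : Set G := {x : G | ∀ k < n, x k = 0}

/-- `μ` is the normalized Haar (fair-coin product) measure on `G`: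
it gives each cylinder of depth `n` measure `2⁻ⁿ`. -/
def IsStdHaar (μ : Measure G) : Prop :=
  ∀ (n : ℕ) (x : G), μ {y : G | ∀ k < n, y k = x k} = 2⁻¹ ^ n


/-- A `p`-atom supported on the square `I_N × I_N`. -/
def IsPAtom (μ : Measure G) (p : ℝ) (N : ℕ) (a : G × G → ℝ) : Prop :=
  Measurable a ∧
    (∀ z : G × G, z ∉ Icyl N ×ˢ Icyl N → a z = 0) ∧
    (∫ z, a z ∂(μ.prod μ)) = 0 ∧
    ∀ z, |a z| ≤ (2 : ℝ) ^ ((2 * N : ℝ) / p)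

/-- Two-dimensional Walsh-Fourier coefficient. -/
def fourierCoef (μ : Measure G) (a : G × G → ℝ) (i j : ℕ) : ℝ :=
  ∫ z, a z * walsh i z.1 * walsh j z.2 ∂(μ.prod μ)

/-- Quadratical partial sum `S_{n,n} a` of the two-dimensional Walsh-Fourier series. -/
def sqPartialSum (μ : Measure G) (a : G × G → ℝ) (n : ℕ) (z : G × G) : ℝ :=
  ∑ i ∈ Finset.range n, ∑ j ∈ Finset.range n,
    fourierCoef μ a i j * walsh i z.1 * walsh j z.2

/-- The σ-algebra on `G × G` generated by the dyadic squares `I_n(x) × I_n(y)`,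
i.e. by the first `n` coordinates of each factor. -/
def dyadicSA (n : ℕ) : MeasurableSpace (G × G) :=
  MeasurableSpace.comap (fun z : G × G => fun k : Fin n => (z.1 k, z.2 k)) ⊤

/-- A (one-parameter) martingale with respect to the dyadic-square filtration. -/
def IsDyadicMartingale (μ : Measure G) (f : ℕ → G × G → ℝ) : Prop :=
  (∀ n, Integrable (f n) (μ.prod μ)) ∧
    (∀ n, Measurable[dyadicSA n] (f n)) ∧
    (∀ n, (μ.prod μ)[f (n + 1)|dyadicSA n] =ᵐ[μ.prod μ] f n)

/-- `‖f‖_{H_p}^p = ∫ (sup_n |f_{n,n}|)^p dμ`, as an extended real. -/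
def hardyNormP (μ : Measure G) (f : ℕ → G × G → ℝ) (p : ℝ) : ℝ≥0∞ :=
  ∫⁻ z, (⨆ n, (‖f n z‖₊ : ℝ≥0∞)) ^ p ∂(μ.prod μ)

/-- Walsh-Fourier coefficient of a martingale: `∫ f_{k,k} w_i(x) w_j(y)` for any
`k` with `2^k > max i j`; `k = max i j + 1` works. -/
def martCoef (μ : Measure G) (f : ℕ → G × G → ℝ) (i j : ℕ) : ℝ :=
  ∫ z, f (max i j + 1) z * walsh i z.1 * walsh j z.2 ∂(μ.prod μ)

/-- Quadratical partial sum `S_{n,n} f` of a martingale. -/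
def martSq (μ : Measure G) (f : ℕ → G × G → ℝ) (n : ℕ) (z : G × G) : ℝ :=
  ∑ i ∈ Finset.range n, ∑ j ∈ Finset.range n,
    martCoef μ f i j * walsh i z.1 * walsh j z.2

/-- The weak-`L_p` quasinorm `sup_{λ>0} λ · ν(|g| > λ)^{1/p}`. -/
def weakLpNorm (ν : Measure (G × G)) (g : G × G → ℝ) (p : ℝ) : ℝ≥0∞ :=
  ⨆ t : ℝ≥0, (t : ℝ≥0∞) * ν {z | (t : ℝ) < |g z|} ^ (1 / p)

/-- The atom `a_α` from the counterexample construction. -/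
def atomFun (p : ℝ) (α : ℕ) (z : G × G) : ℝ :=
  (2 : ℝ) ^ ((α : ℝ) * (2 / p - 2)) *
    (dirichlet (2 ^ (α + 1)) z.1 - dirichlet (2 ^ α) z.1) *
    (dirichlet (2 ^ (α + 1)) z.2 - dirichlet (2 ^ α) z.2)

/-- The counterexample martingale `f_{A,A} = ∑_{α_k < A} Φ(2^{α_k})^{-1/4} a_k`. -/
def counterMart (p : ℝ) (Φ : ℕ → ℝ) (α : ℕ → ℕ) (A : ℕ) (z : G × G) : ℝ :=
  ∑ k ∈ Finset.range A,
    if α k < A then (Φ (2 ^ α k)) ^ (-(1 / 4 : ℝ)) * atomFun p (α k) z else 0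

/-!
Off `I₁` the Walsh functions pair up, `w (2s+1) = -w (2s)`, so the Dirichlet kernel vanishes at
every even index and has modulus `1` at every odd one. By orthonormality of the Walsh system, the
`(i, j)` coefficient of `f` is `λ_κ 2^{α_κ(2/p-2)}` when `i` and `j` both lie in the dyadic block
`[2^{α_κ}, 2^{α_κ+1})` and `0` otherwise, so `S_{n,n} f (x, y)` is the sum over `κ ≤ k` of
`λ_κ 2^{α_κ(2/p-2)} P_κ(x) P_κ(y)` with `P_κ = D_{min(n, 2^{α_κ+1})} - D_{2^{α_κ}}`.
The completed blocks `κ < k` only involve kernels at even indices, and the partial block `κ = k`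
is `λ_k 2^{α_k(2/p-2)} D_n(x) D_n(y)`, of modulus `λ_k 2^{α_k(2/p-2)}` since `n` is odd.
-/

open Finset

lemma two_mul_xor_one (s : ℕ) : 2 * s ^^^ 1 = 2 * s + 1 := by
  apply Nat.eq_of_testBit_eq
  intro k
  cases k <;> simp [Nat.testBit_succ, Nat.mul_add_div]

lemma walsh_eq_prod_range {n M : ℕ} (h : n < 2 ^ M) (x : G) :
    walsh n x = ∏ k ∈ range M, if n.testBit k ∧ x k = 1 then -1 else 1 := by
  have hbit : ∀ {N k : ℕ}, n < 2 ^ N → k ∉ range N →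
      (if n.testBit k ∧ x k = 1 then (-1 : ℝ) else 1) = 1 := fun hN hk => by
    rw [Nat.testBit_lt_two_pow
      (hN.trans_le (Nat.pow_le_pow_right two_pos (not_lt.1 (mem_range.not.1 hk))))]
    simp
  exact prod_congr_of_eq_on_inter (fun k _ hk => hbit h hk)
    (fun k _ hk =>
      hbit (Nat.lt_two_pow_self.trans (Nat.pow_lt_pow_right one_lt_two n.lt_succ_self)) hk)
    (fun _ _ _ => rfl)

lemma walsh_mul (i j : ℕ) (x : G) : walsh i x * walsh j x = walsh (i ^^^ j) x := by
  obtain ⟨M, hi, hj⟩ : ∃ M, i < 2 ^ M ∧ j < 2 ^ M :=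
    ⟨max i j, (le_max_left i j).trans_lt Nat.lt_two_pow_self,
      (le_max_right i j).trans_lt Nat.lt_two_pow_self⟩
  rw [walsh_eq_prod_range hi, walsh_eq_prod_range hj,
    walsh_eq_prod_range (Nat.xor_lt_two_pow hi hj), ← prod_mul_distrib]
  refine prod_congr rfl fun k _ => ?_
  by_cases hxk : x k = 1
  · cases hik : i.testBit k <;> cases hjk : j.testBit k <;> simp [hxk, Nat.testBit_xor, hik, hjk]
  · simp [hxk]

lemma abs_walsh (m : ℕ) (x : G) : |walsh m x| = 1 := by
  rw [walsh, abs_prod]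
  exact prod_eq_one fun k _ => by split <;> norm_num

lemma walsh_one (x : G) : walsh 1 x = if x 0 = 1 then -1 else 1 := by
  simp [walsh, prod_range_succ, show Nat.testBit 1 1 = false by decide]

lemma walsh_eq_prod_coord (m : ℕ) :
    walsh m = fun x => ∏ i : Fin (m + 1), if m.testBit i ∧ x i = 1 then -1 else 1 :=
  funext fun x =>
    (Fin.prod_univ_eq_prod_range (fun k => if m.testBit k ∧ x k = 1 then (-1 : ℝ) else 1) _).symm

section OutsideI1

variable {x : G}

lemma walsh_two_mul_add_one (hx : x 0 = 1) (s : ℕ) : walsh (2 * s + 1) x = -walsh (2 * s) x := by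
  rw [← two_mul_xor_one, ← walsh_mul, walsh_one, if_pos hx, mul_neg_one]

lemma dirichlet_two_mul (hx : x 0 = 1) (s : ℕ) : dirichlet (2 * s) x = 0 := by
  induction s with
  | zero => simp [dirichlet]
  | succ s ih =>
    rw [dirichlet, show 2 * (s + 1) = 2 * s + 1 + 1 by ring, sum_range_succ, sum_range_succ,
      ← dirichlet, ih, walsh_two_mul_add_one hx]
    ring

lemma abs_dirichlet_of_odd (hx : x 0 = 1) {n : ℕ} (hn : Odd n) : |dirichlet n x| = 1 := by
  obtain ⟨s, rfl⟩ := hn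
  rw [dirichlet, sum_range_succ, ← dirichlet, dirichlet_two_mul hx, zero_add, abs_walsh]

lemma dirichlet_two_pow (hx : x 0 = 1) {m : ℕ} (hm : m ≠ 0) : dirichlet (2 ^ m) x = 0 := by
  obtain ⟨m, rfl⟩ := Nat.exists_eq_succ_of_ne_zero hm
  rw [pow_succ']
  exact dirichlet_two_mul hx _

end OutsideI1

def dyadicBlock (a : ℕ) : Finset ℕ := Ico (2 ^ a) (2 ^ (a + 1))

lemma dirichlet_sub_dirichlet_eq_sum (a : ℕ) (x : G) :
    dirichlet (2 ^ (a + 1)) x - dirichlet (2 ^ a) x = ∑ i ∈ dyadicBlock a, walsh i x :=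
  (sum_Ico_eq_sub _ (Nat.pow_le_pow_right two_pos a.le_succ)).symm

lemma sum_range_mul_ite_mem_dyadicBlock (f : ℕ → ℝ) {a n : ℕ} (hn : 2 ^ a ≤ n) :
    ∑ i ∈ range n, (if i ∈ dyadicBlock a then 1 else 0) * f i =
      ∑ i ∈ range (min n (2 ^ (a + 1))), f i - ∑ i ∈ range (2 ^ a), f i := by
  simp only [ite_mul, one_mul, zero_mul]
  rw [sum_ite_mem, dyadicBlock, range_eq_Ico, Ico_inter_Ico, max_eq_right (Nat.zero_le _),
    sum_Ico_eq_sub _ (le_min hn (Nat.pow_le_pow_right two_pos a.le_succ)), range_eq_Ico,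
    range_eq_Ico]

lemma sum_sum_sum_rankOne_mul_mul {ι : Type*} (s : Finset ι) (t : Finset ℕ) (c : ι → ℝ)
    (e : ι → ℕ → ℝ) (u v : ℕ → ℝ) :
    ∑ i ∈ t, ∑ j ∈ t, (∑ κ ∈ s, c κ * e κ i * e κ j) * u i * v j =
      ∑ κ ∈ s, c κ * (∑ i ∈ t, e κ i * u i) * ∑ j ∈ t, e κ j * v j := by
  simp only [mul_sum, sum_mul]
  rw [sum_comm]
  refine (sum_congr rfl fun j _ => sum_comm).trans <| sum_comm.trans <|
    sum_congr rfl fun κ _ => sum_congr rfl fun i _ => sum_congr rfl fun j _ => by ring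

lemma atomFun_mul_walsh_mul_walsh (p : ℝ) (a i j : ℕ) (z : G × G) :
    atomFun p a z * walsh i z.1 * walsh j z.2 = 2 ^ ((a : ℝ) * (2 / p - 2)) *
      (((∑ i' ∈ dyadicBlock a, walsh i' z.1) * walsh i z.1) *
        ((∑ j' ∈ dyadicBlock a, walsh j' z.2) * walsh j z.2)) := by
  rw [atomFun, dirichlet_sub_dirichlet_eq_sum, dirichlet_sub_dirichlet_eq_sum]
  ring

lemma counterMart_eq_sum (p : ℝ) (Φ : ℕ → ℝ) (α : ℕ → ℕ) (A : ℕ) :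
    counterMart p Φ α A = fun z => ∑ κ ∈ (range A).filter (α · < A),
      Φ (2 ^ α κ) ^ (-(1 / 4 : ℝ)) * atomFun p (α κ) z :=
  funext fun _ => (sum_filter _ _).symm

section StdHaar

variable {μ : Measure G}

lemma isProbabilityMeasure_of_isStdHaar (hμ : IsStdHaar μ) : IsProbabilityMeasure μ :=
  ⟨by simpa using hμ 0 0⟩

lemma measure_preimage_restrict_singleton (hμ : IsStdHaar μ) {N : ℕ} (v : Fin N → ZMod 2) :
    μ ((fun (x : G) (i : Fin N) => x i) ⁻¹' {v}) = 2⁻¹ ^ N := by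
  rw [← hμ N (fun k => if h : k < N then v ⟨k, h⟩ else 0)]
  congr 1
  ext y
  simp only [Set.mem_preimage, Set.mem_singleton_iff, funext_iff, Set.mem_ofPred_eq]
  exact ⟨fun hy k hk => by simpa [hk] using hy ⟨k, hk⟩, fun hy i => by simpa using hy i i.isLt⟩

lemma integrable_comp_restrict (hμ : IsStdHaar μ) {N : ℕ} (F : (Fin N → ZMod 2) → ℝ) :
    Integrable (fun x : G => F (fun i => x i)) μ := by
  have := isProbabilityMeasure_of_isStdHaar hμ
  have hm : Measurable (fun (x : G) (i : Fin N) => x i) := by fun_prop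
  exact (integrable_map_measure Integrable.of_finite.aestronglyMeasurable hm.aemeasurable).1
    Integrable.of_finite

lemma integral_comp_restrict (hμ : IsStdHaar μ) {N : ℕ} (F : (Fin N → ZMod 2) → ℝ) :
    ∫ x, F (fun i => x i) ∂μ = 2⁻¹ ^ N * ∑ v, F v := by
  have := isProbabilityMeasure_of_isStdHaar hμ
  have hm : Measurable (fun (x : G) (i : Fin N) => x i) := by fun_prop
  rw [← integral_map hm.aemeasurable Integrable.of_finite.aestronglyMeasurable,
    integral_fintype Integrable.of_finite, mul_sum]
  refine sum_congr rfl fun v _ => ?_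
  rw [measureReal_def, Measure.map_apply hm (MeasurableSet.singleton v),
    measure_preimage_restrict_singleton hμ, smul_eq_mul]
  simp

lemma integrable_prod_coord (hμ : IsStdHaar μ) {N : ℕ} (g : Fin N → ZMod 2 → ℝ) :
    Integrable (fun x : G => ∏ i, g i (x i)) μ :=
  integrable_comp_restrict hμ fun v => ∏ i, g i (v i)

lemma integral_prod_coord (hμ : IsStdHaar μ) {N : ℕ} (g : Fin N → ZMod 2 → ℝ) :
    ∫ x, ∏ i, g i (x i) ∂μ = ∏ i, 2⁻¹ * ∑ c, g i c := by
  rw [integral_comp_restrict hμ fun v => ∏ i, g i (v i), prod_mul_distrib, prod_const, card_univ,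
    Fintype.card_fin, Fintype.prod_sum]

lemma integrable_walsh (hμ : IsStdHaar μ) (m : ℕ) : Integrable (walsh m) μ := by
  rw [walsh_eq_prod_coord]
  exact integrable_prod_coord hμ fun i c => if m.testBit i ∧ c = 1 then -1 else 1

lemma integral_walsh (hμ : IsStdHaar μ) (m : ℕ) : ∫ x, walsh m x ∂μ = if m = 0 then 1 else 0 := by
  rw [walsh_eq_prod_coord]
  refine (integral_prod_coord hμ fun i c => if m.testBit i ∧ c = 1 then -1 else 1).trans ?_
  have hfactor : ∀ i : Fin (m + 1),
      2⁻¹ * ∑ c : ZMod 2, (if m.testBit i ∧ c = 1 then (-1 : ℝ) else 1) =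
        if m.testBit i then 0 else 1 := by
    intro i
    have hsum_two : ∀ f : ZMod 2 → ℝ, ∑ c, f c = f 0 + f 1 := Fin.sum_univ_two
    cases m.testBit i <;> norm_num [hsum_two]
  simp_rw [hfactor]
  split_ifs with hm
  · simp [hm]
  · obtain ⟨i, hi⟩ := Nat.exists_testBit_of_ne_zero hm
    have him : i < m + 1 := by
      have := (Nat.lt_two_pow_self (n := i)).trans_le (Nat.ge_two_pow_of_testBit hi)
      omega
    exact prod_eq_zero (mem_univ ⟨i, him⟩) (by simp [hi])

lemma integral_walsh_mul_walsh (hμ : IsStdHaar μ) (i j : ℕ) :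
    ∫ x, walsh i x * walsh j x ∂μ = if i = j then 1 else 0 := by
  simp_rw [walsh_mul, integral_walsh hμ, xor_eq_zero_iff]

lemma integrable_walsh_mul_walsh (hμ : IsStdHaar μ) (i j : ℕ) :
    Integrable (fun x => walsh i x * walsh j x) μ := by
  simpa only [walsh_mul] using integrable_walsh hμ (i ^^^ j)

lemma integrable_sum_walsh_mul_walsh (hμ : IsStdHaar μ) (s : Finset ℕ) (j : ℕ) :
    Integrable (fun x => (∑ i ∈ s, walsh i x) * walsh j x) μ := by
  simp_rw [sum_mul]
  exact integrable_finsetSum _ fun i _ => integrable_walsh_mul_walsh hμ i j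

lemma integral_sum_walsh_mul_walsh (hμ : IsStdHaar μ) (s : Finset ℕ) (j : ℕ) :
    ∫ x, (∑ i ∈ s, walsh i x) * walsh j x ∂μ = if j ∈ s then 1 else 0 := by
  simp_rw [sum_mul]
  rw [integral_finsetSum _ fun i _ => integrable_walsh_mul_walsh hμ i j]
  simp_rw [integral_walsh_mul_walsh hμ]
  exact sum_ite_eq' s j fun _ => 1

lemma integrable_atomFun_mul_walsh_mul_walsh (hμ : IsStdHaar μ) (p : ℝ) (a i j : ℕ) :
    Integrable (fun z => atomFun p a z * walsh i z.1 * walsh j z.2) (μ.prod μ) := by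
  have := isProbabilityMeasure_of_isStdHaar hμ
  simp_rw [atomFun_mul_walsh_mul_walsh]
  exact ((integrable_sum_walsh_mul_walsh hμ _ i).mul_prod
    (integrable_sum_walsh_mul_walsh hμ _ j)).const_mul _

lemma fourierCoef_atomFun (hμ : IsStdHaar μ) (p : ℝ) (a i j : ℕ) :
    fourierCoef μ (atomFun p a) i j = 2 ^ ((a : ℝ) * (2 / p - 2)) *
      (if i ∈ dyadicBlock a then 1 else 0) * (if j ∈ dyadicBlock a then 1 else 0) := by
  have := isProbabilityMeasure_of_isStdHaar hμ
  simp_rw [fourierCoef, atomFun_mul_walsh_mul_walsh]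
  rw [integral_const_mul,
    integral_prod_mul (fun x => (∑ i' ∈ dyadicBlock a, walsh i' x) * walsh i x)
      (fun y => (∑ j' ∈ dyadicBlock a, walsh j' y) * walsh j y),
    integral_sum_walsh_mul_walsh hμ, integral_sum_walsh_mul_walsh hμ, mul_assoc]

lemma fourierCoef_sum_mul {ι : Type*} (s : Finset ι) (c : ι → ℝ) (g : ι → G × G → ℝ) {i j : ℕ}
    (hg : ∀ κ ∈ s, Integrable (fun z => g κ z * walsh i z.1 * walsh j z.2) (μ.prod μ)) :
    fourierCoef μ (fun z => ∑ κ ∈ s, c κ * g κ z) i j = ∑ κ ∈ s, c κ * fourierCoef μ (g κ) i j := by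
  have hexpand : ∀ z : G × G, (∑ κ ∈ s, c κ * g κ z) * walsh i z.1 * walsh j z.2 =
      ∑ κ ∈ s, c κ * (g κ z * walsh i z.1 * walsh j z.2) := fun z => by
    rw [sum_mul, sum_mul]
    exact sum_congr rfl fun _ _ => by ring
  simp_rw [fourierCoef, hexpand]
  rw [integral_finsetSum _ fun κ hκ => (hg κ hκ).const_mul (c κ)]
  simp_rw [integral_const_mul]

lemma martCoef_counterMart (hμ : IsStdHaar μ) (p : ℝ) (Φ : ℕ → ℝ) {α : ℕ → ℕ}
    (hα : StrictMono α) {i j : ℕ} {s : Finset ℕ} (hs : ∀ κ, i ∈ dyadicBlock (α κ) → κ ∈ s) :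
    martCoef μ (counterMart p Φ α) i j = ∑ κ ∈ s,
      Φ (2 ^ α κ) ^ (-(1 / 4 : ℝ)) * 2 ^ ((α κ : ℝ) * (2 / p - 2)) *
        (if i ∈ dyadicBlock (α κ) then 1 else 0) * (if j ∈ dyadicBlock (α κ) then 1 else 0) := by
  -- `martCoef` reads `f` at level `max i j + 1`, which contains every atom whose block holds `i`.
  have hlevel : ∀ κ, i ∈ dyadicBlock (α κ) → κ ∈ (range (max i j + 1)).filter (α · < max i j + 1) :=
    fun κ hκ => by
      have h1 : κ ≤ α κ := hα.le_apply
      have h2 : α κ < 2 ^ α κ := Nat.lt_two_pow_self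
      have h3 : 2 ^ α κ ≤ i := (mem_Ico.1 hκ).1
      simp only [mem_filter, mem_range]
      omega
  change fourierCoef μ (counterMart p Φ α (max i j + 1)) i j = _
  rw [counterMart_eq_sum,
    fourierCoef_sum_mul _ _ _ fun κ _ => integrable_atomFun_mul_walsh_mul_walsh hμ p (α κ) i j]
  simp_rw [fourierCoef_atomFun hμ]
  refine sum_congr_of_eq_on_inter (fun κ _ hκ => ?_) (fun κ _ hκ => ?_) fun κ _ _ => by ring
  · rw [if_neg (mt (hs κ) hκ)]
    ring
  · rw [if_neg (mt (hlevel κ) hκ)]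
    ring

lemma martSq_counterMart (hμ : IsStdHaar μ) (p : ℝ) (Φ : ℕ → ℝ) {α : ℕ → ℕ}
    (hα : StrictMono α) {k n : ℕ} (hn1 : 2 ^ α k ≤ n) (hn2 : n < 2 ^ (α k + 1)) (z : G × G) :
    martSq μ (counterMart p Φ α) n z = ∑ κ ∈ range (k + 1),
      Φ (2 ^ α κ) ^ (-(1 / 4 : ℝ)) * 2 ^ ((α κ : ℝ) * (2 / p - 2)) *
        (dirichlet (min n (2 ^ (α κ + 1))) z.1 - dirichlet (2 ^ α κ) z.1) *
        (dirichlet (min n (2 ^ (α κ + 1))) z.2 - dirichlet (2 ^ α κ) z.2) := by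
  have hblock : ∀ i < n, ∀ κ, i ∈ dyadicBlock (α κ) → κ ∈ range (k + 1) := fun i hi κ hκ => by
    have : α κ < α k + 1 :=
      (Nat.pow_lt_pow_iff_right one_lt_two).1 ((mem_Ico.1 hκ).1.trans_lt (hi.trans hn2))
    exact mem_range.2 (Nat.lt_succ_of_le (hα.le_iff_le.1 (Nat.lt_succ_iff.1 this)))
  rw [martSq, sum_congr rfl fun i hi => sum_congr rfl fun j _ => by
    rw [martCoef_counterMart hμ p Φ hα (hblock i (mem_range.1 hi))]]
  refine (sum_sum_sum_rankOne_mul_mul _ _ _ (fun κ i => if i ∈ dyadicBlock (α κ) then 1 else 0)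
    (walsh · z.1) (walsh · z.2)).trans (sum_congr rfl fun κ hκ => ?_)
  have hstart : 2 ^ α κ ≤ n :=
    (Nat.pow_le_pow_right two_pos (hα.monotone (Nat.lt_succ_iff.1 (mem_range.1 hκ)))).trans hn1
  rw [sum_range_mul_ite_mem_dyadicBlock _ hstart, sum_range_mul_ite_mem_dyadicBlock _ hstart]
  rfl

end StdHaar

theorem counterMart_sq_abs_general (p : ℝ)
    (μ : Measure G) (hμ : IsStdHaar μ)
    (Φ : ℕ → ℝ) (hΦ1 : ∀ m, 1 ≤ Φ m)
    (α : ℕ → ℕ) (hα : StrictMono α) (hα0 : 2 ≤ α 0)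
    (k n : ℕ) (hn1 : 2 ^ α k < n) (hn2 : n < 2 ^ (α k + 1)) (hodd : Odd n)
    (x y : G) (hx : x 0 = 1) (hy : y 0 = 1) :
    |martSq μ (counterMart p Φ α) n (x, y)| =
      (2 : ℝ) ^ ((α k : ℝ) * (2 / p - 2)) / (Φ (2 ^ α k)) ^ ((1 : ℝ) / 4) := by
  have hα_ne : ∀ κ, α κ ≠ 0 := fun κ => by have := hα.monotone κ.zero_le; omega
  have hpartial : ∀ w : G, w 0 = 1 →
      dirichlet (min n (2 ^ (α k + 1))) w - dirichlet (2 ^ α k) w = dirichlet n w := fun w hw => by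
    rw [min_eq_left hn2.le, dirichlet_two_pow hw (hα_ne k), sub_zero]
  have hcomplete : ∀ κ < k, ∀ w : G, w 0 = 1 →
      dirichlet (min n (2 ^ (α κ + 1))) w - dirichlet (2 ^ α κ) w = 0 := fun κ hκ w hw => by
    have : 2 ^ (α κ + 1) ≤ n := (Nat.pow_le_pow_right two_pos (hα hκ)).trans hn1.le
    rw [min_eq_right this, dirichlet_two_pow hw (Nat.succ_ne_zero _),
      dirichlet_two_pow hw (hα_ne κ), sub_zero]
  have hΦ : 0 < Φ (2 ^ α k) := one_pos.trans_le (hΦ1 _)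
  rw [martSq_counterMart hμ p Φ hα hn1.le hn2, sum_range_succ,
    sum_eq_zero fun κ hκ => by rw [hcomplete κ (mem_range.1 hκ) x hx, mul_zero, zero_mul],
    zero_add, hpartial x hx, hpartial y hy, abs_mul, abs_mul, abs_dirichlet_of_odd hx hodd,
    abs_dirichlet_of_odd hy hodd, mul_one, mul_one, abs_of_pos (by positivity),
    Real.rpow_neg hΦ.le, inv_mul_eq_div]

/-- On `(G \ I_1) × (G \ I_1)`, for odd `n` with `2^{α_k} < n < 2^{α_k + 1}`,
`|S_{n,n} f(x,y)| = 2^{α_k(2/p-2)} / Φ(2^{α_k})^{1/4}`. -/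
theorem counterMart_sq_abs (p : ℝ) (hp0 : 0 < p) (hp1 : p < 1)
    (μ : Measure G) (hμ : IsStdHaar μ)
    (Φ : ℕ → ℝ) (hΦ1 : ∀ m, 1 ≤ Φ m)
    (α : ℕ → ℕ) (hα : StrictMono α) (hα0 : 2 ≤ α 0)
    (k n : ℕ) (hn1 : 2 ^ α k < n) (hn2 : n < 2 ^ (α k + 1)) (hodd : Odd n)
    (x y : G) (hx : x 0 = 1) (hy : y 0 = 1) :
    |martSq μ (counterMart p Φ α) n (x, y)| =
      (2 : ℝ) ^ ((α k : ℝ) * (2 / p - 2)) / (Φ (2 ^ α k)) ^ ((1 : ℝ) / 4) :=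
  counterMart_sq_abs_general p μ hμ Φ hΦ1 α hα hα0 k n hn1 hn2 hodd x y hx hy

end
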